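/- arXiv:1906.08020 — 2 statements merged into one kernel-verified Lean document; each statement's English description precedes it below -/
import Mathlib

section
/- Let L₁, L₂, L₃ > 0 and Ω = (0,L₁)×(0,L₂)×(0,L₃). Let v : ℝ³ → ℝ³ be infinitely differentiable and Ω-periodic, and suppose div v(x) = 0 for all x ∈ ℝ³. Then ∫_Ω |Δ D(v)(x)|² dx = ½ ∫_Ω Σ_{k,m,p,q=1}^{3} (∂³ v_k/∂x_m ∂x_p ∂x_q (x))² dx, where the Laplacian Δ acts on each entry of the matrix D(v). -/
open MeasureTheory

/-- Partial derivative in the `i`-th coordinate direction. -/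
noncomputable def pd (i : Fin 3) (f : (Fin 3 → ℝ) → ℝ) (x : Fin 3 → ℝ) : ℝ :=
  fderiv ℝ f x (Pi.single i 1)

/-- Laplacian. -/
noncomputable def lap (f : (Fin 3 → ℝ) → ℝ) (x : Fin 3 → ℝ) : ℝ :=
  ∑ p, pd p (pd p f) x

/-- Ω-periodicity predicate. -/
def PerQ (L : Fin 3 → ℝ) (f : (Fin 3 → ℝ) → ℝ) : Prop :=
  ∀ (x : Fin 3 → ℝ) (k : ℤ) (i : Fin 3),
    f (x + (k : ℝ) • (Pi.single i (L i) : Fin 3 → ℝ)) = f x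

lemma smooth_pd {f : (Fin 3 → ℝ) → ℝ} (hf : ContDiff ℝ (⊤ : ℕ∞) f) (i : Fin 3) :
    ContDiff ℝ (⊤ : ℕ∞) (pd i f) := by
  have h1 : ContDiff ℝ (⊤ : ℕ∞) (fderiv ℝ f) := hf.fderiv_right (by simp)
  exact h1.clm_apply contDiff_const

lemma pd_add {f g : (Fin 3 → ℝ) → ℝ} {x : Fin 3 → ℝ}
    (hf : DifferentiableAt ℝ f x) (hg : DifferentiableAt ℝ g x) (i : Fin 3) :
    pd i (fun y => f y + g y) x = pd i f x + pd i g x := by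
  unfold pd; rw [fderiv_fun_add hf hg]; simp

lemma pd_div {f : (Fin 3 → ℝ) → ℝ} {x : Fin 3 → ℝ} (c : ℝ)
    (hf : DifferentiableAt ℝ f x) (i : Fin 3) :
    pd i (fun y => f y / c) x = pd i f x / c := by
  unfold pd
  have : (fun y => f y / c) = fun y => f y * c⁻¹ := by funext y; rw [div_eq_mul_inv]
  rw [this, fderiv_mul_const hf]
  simp [div_eq_mul_inv, mul_comm]

lemma pd_sum {f : Fin 3 → (Fin 3 → ℝ) → ℝ} {x : Fin 3 → ℝ}
    (hf : ∀ m, DifferentiableAt ℝ (f m) x) (i : Fin 3) :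
    pd i (fun y => ∑ m, f m y) x = ∑ m, pd i (f m) x := by
  unfold pd
  rw [fderiv_fun_sum (fun m _ => hf m)]
  simp

lemma pd_const (c : ℝ) (i : Fin 3) (x : Fin 3 → ℝ) : pd i (fun _ => c) x = 0 := by
  unfold pd; rw [fderiv_fun_const]; simp

lemma pd_congr {f g : (Fin 3 → ℝ) → ℝ} (h : ∀ y, f y = g y) (i : Fin 3) :
    pd i f = pd i g := by
  have : f = g := funext h
  rw [this]

lemma pd_comm {f : (Fin 3 → ℝ) → ℝ} (hf : ContDiff ℝ (⊤ : ℕ∞) f) (i j : Fin 3)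
    (x : Fin 3 → ℝ) : pd i (pd j f) x = pd j (pd i f) x := by
  have hder : ∀ y, HasFDerivAt f (fderiv ℝ f y) y := fun y =>
    (hf.differentiable (by simp) y).hasFDerivAt
  have hF : ContDiff ℝ (⊤ : ℕ∞) (fderiv ℝ f) := hf.fderiv_right (by simp)
  have hF' : HasFDerivAt (fderiv ℝ f) (fderiv ℝ (fderiv ℝ f) x) x :=
    (hF.differentiable (by simp) x).hasFDerivAt
  have key := second_derivative_symmetric hder hF' (Pi.single i 1) (Pi.single j 1)
  have comp : ∀ (w : Fin 3 → ℝ),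
      fderiv ℝ (fun y => fderiv ℝ f y w) x
        = (ContinuousLinearMap.apply ℝ ℝ w).comp (fderiv ℝ (fderiv ℝ f) x) := by
    intro w
    exact (((ContinuousLinearMap.apply ℝ ℝ w).hasFDerivAt).comp x hF').fderiv
  show fderiv ℝ (fun y => fderiv ℝ f y (Pi.single j 1)) x (Pi.single i 1)
      = fderiv ℝ (fun y => fderiv ℝ f y (Pi.single i 1)) x (Pi.single j 1)
  rw [comp, comp]
  simpa using key
lemma perQ_pd {L : Fin 3 → ℝ} {f : (Fin 3 → ℝ) → ℝ} (hf : ContDiff ℝ (⊤ : ℕ∞) f)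
    (hp : PerQ L f) (j : Fin 3) : PerQ L (pd j f) := by
  intro x k i
  set c : Fin 3 → ℝ := (k : ℝ) • (Pi.single i (L i) : Fin 3 → ℝ) with hc
  have h1 : HasFDerivAt (fun y : Fin 3 → ℝ => y + c)
      (ContinuousLinearMap.id ℝ (Fin 3 → ℝ)) x := by
    simpa using (hasFDerivAt_id (𝕜 := ℝ) x).add_const c
  have h2 : HasFDerivAt f (fderiv ℝ f (x + c)) (x + c) :=
    (hf.differentiable (by simp) (x + c)).hasFDerivAt
  have h3 := h2.comp x h1
  have heq : (fun y => f (y + c)) = f := funext fun y => hp y k i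
  rw [show (f ∘ fun y : Fin 3 → ℝ => y + c) = fun y => f (y + c) from rfl, heq] at h3
  have : fderiv ℝ f x = fderiv ℝ f (x + c) := by
    rw [h3.fderiv]; ext w; simp
  show fderiv ℝ f (x + c) (Pi.single j 1) = fderiv ℝ f x (Pi.single j 1)
  rw [this]

lemma perQ_mul {L : Fin 3 → ℝ} {f g : (Fin 3 → ℝ) → ℝ} (hf : PerQ L f) (hg : PerQ L g) :
    PerQ L (fun y => f y * g y) := fun x k i => by simp [hf x k i, hg x k i]

lemma subset_Icc {L : Fin 3 → ℝ} :
    (Set.univ.pi fun j => Set.Ioo (0:ℝ) (L j)) ⊆ Set.Icc (0 : Fin 3 → ℝ) L := by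
  intro x hx
  constructor
  · intro j; exact (hx j (Set.mem_univ j)).1.le
  · intro j; exact (hx j (Set.mem_univ j)).2.le

lemma intgOn {L : Fin 3 → ℝ} {φ : (Fin 3 → ℝ) → ℝ} (hφ : Continuous φ) :
    IntegrableOn φ (Set.univ.pi fun j => Set.Ioo (0:ℝ) (L j)) :=
  (hφ.continuousOn.integrableOn_compact isCompact_Icc).mono_set subset_Icc

lemma integral_Ioo_eq_Icc {L : Fin 3 → ℝ} (φ : (Fin 3 → ℝ) → ℝ) :
    (∫ x in Set.univ.pi fun j => Set.Ioo (0:ℝ) (L j), φ x)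
      = ∫ x in Set.Icc (0 : Fin 3 → ℝ) L, φ x := by
  apply setIntegral_congr_set
  rw [MeasureTheory.volume_pi]
  exact MeasureTheory.Measure.univ_pi_Ioo_ae_eq_Icc
lemma insertNth_top_eq {L : Fin 3 → ℝ} (i : Fin 3) (y : Fin 2 → ℝ) :
    i.insertNth (L i) y
      = i.insertNth ((0 : Fin 3 → ℝ) i) y + ((1 : ℤ) : ℝ) • (Pi.single i (L i) : Fin 3 → ℝ) := by
  funext j
  simp only [Pi.add_apply, Pi.smul_apply, Int.cast_one, one_smul]
  refine Fin.succAboveCases i ?_ ?_ j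
  · simp
  · intro t
    simp [Fin.insertNth_apply_succAbove, Pi.single_eq_of_ne (Fin.succAbove_ne i t)]

lemma integral_pd_eq_zero {L : Fin 3 → ℝ} (hL : ∀ i, 0 < L i)
    {h : (Fin 3 → ℝ) → ℝ} (hh : ContDiff ℝ (⊤ : ℕ∞) h) (hper : PerQ L h) (i : Fin 3) :
    (∫ x in Set.univ.pi fun j => Set.Ioo (0:ℝ) (L j), pd i h x) = 0 := by
  classical
  rw [integral_Ioo_eq_Icc]
  set f : (Fin 3 → ℝ) → (Fin 3 → ℝ) := fun x => Pi.single i (h x) with hf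
  set f' : (Fin 3 → ℝ) → (Fin 3 → ℝ) →L[ℝ] (Fin 3 → ℝ) := fun x =>
    ContinuousLinearMap.pi (fun j => if j = i then fderiv ℝ h x else 0) with hf'
  have hdiff : Differentiable ℝ h := hh.differentiable (by simp)
  have hsum : ∀ x, (∑ j, f' x (Pi.single j 1) j) = pd i h x := by
    intro x
    have : ∀ j : Fin 3, f' x (Pi.single j 1) j
        = if j = i then fderiv ℝ h x (Pi.single i 1) else 0 := by
      intro j
      simp only [hf', ContinuousLinearMap.pi_apply]
      by_cases hj : j = i
      · subst hj; simp
      · simp [hj]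
    simp only [this, Finset.sum_ite_eq' Finset.univ i, Finset.mem_univ, if_pos]
    rfl
  have hle : (0 : Fin 3 → ℝ) ≤ L := fun j => (hL j).le
  have Hc : ContinuousOn f (Set.Icc 0 L) := by
    apply Continuous.continuousOn
    apply continuous_pi
    intro j
    by_cases hj : j = i
    · subst hj; simpa [hf, Pi.single_eq_same] using hh.continuous
    · simpa [hf, Pi.single_eq_of_ne hj] using continuous_const
  have Hd : ∀ x ∈ (Set.pi Set.univ fun j => Set.Ioo ((0:Fin 3 → ℝ) j) (L j)) \ (∅ : Set _),
      HasFDerivAt f (f' x) x := by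
    intro x _
    apply hasFDerivAt_pi''
    intro j
    by_cases hj : j = i
    · subst hj
      have : (fun x => f x j) = h := by funext x; simp [hf]
      rw [this]
      have : (ContinuousLinearMap.proj j).comp (f' x) = fderiv ℝ h x := by
        ext w; simp [hf']
      rw [this]
      exact (hdiff x).hasFDerivAt
    · have : (fun x => f x j) = fun _ => (0:ℝ) := by
        funext x; simp [hf, Pi.single_eq_of_ne hj]
      rw [this]
      have : (ContinuousLinearMap.proj j).comp (f' x) = 0 := by
        ext w; simp [hf', hj]
      rw [this]
      exact hasFDerivAt_const 0 x
  have Hi : IntegrableOn (fun x => ∑ j, f' x (Pi.single j 1) j) (Set.Icc (0:Fin 3 → ℝ) L) := by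
    have : Continuous (pd i h) := (smooth_pd hh i).continuous
    refine ((this.continuousOn).integrableOn_compact isCompact_Icc).congr_fun ?_ measurableSet_Icc
    intro x _; exact (hsum x).symm
  have := MeasureTheory.integral_divergence_of_hasFDerivAt_off_countable
    (0 : Fin 3 → ℝ) L hle f f' ∅ Set.countable_empty Hc Hd Hi
  rw [Finset.sum_eq_zero] at this
  · calc (∫ x in Set.Icc (0:Fin 3 → ℝ) L, pd i h x)
        = ∫ x in Set.Icc (0:Fin 3 → ℝ) L, ∑ j, f' x (Pi.single j 1) j := by
          apply setIntegral_congr_fun measurableSet_Icc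
          intro x _; exact (hsum x).symm
      _ = 0 := this
  · intro j _
    by_cases hj : j = i
    · subst hj
      have key : ∀ y : Fin 2 → ℝ, f (j.insertNth (L j) y) j = f (j.insertNth ((0:Fin 3 → ℝ) j) y) j := by
        intro y
        simp only [hf, Pi.single_eq_same]
        rw [insertNth_top_eq (L := L) j y]
        exact hper _ 1 j
      rw [sub_eq_zero]
      apply setIntegral_congr_fun measurableSet_Icc
      intro y _; exact key y
    · have z1 : ∀ y : Fin 2 → ℝ, f (j.insertNth (L j) y) j = 0 := by
        intro y; simp [hf, Pi.single_eq_of_ne hj]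
      have z2 : ∀ y : Fin 2 → ℝ, f (j.insertNth ((0:Fin 3 → ℝ) j) y) j = 0 := by
        intro y; simp [hf, Pi.single_eq_of_ne hj]
      simp only [integral_congr_ae (Filter.Eventually.of_forall z1),
        integral_congr_ae (Filter.Eventually.of_forall z2)]
      simp
lemma pd_mul {f g : (Fin 3 → ℝ) → ℝ} {x : Fin 3 → ℝ}
    (hf : DifferentiableAt ℝ f x) (hg : DifferentiableAt ℝ g x) (i : Fin 3) :
    pd i (fun y => f y * g y) x = pd i f x * g x + f x * pd i g x := by
  unfold pd
  rw [fderiv_fun_mul hf hg]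
  simp [smul_eq_mul]
  ring

lemma ibp {L : Fin 3 → ℝ} (hL : ∀ i, 0 < L i) {f g : (Fin 3 → ℝ) → ℝ}
    (hf : ContDiff ℝ (⊤ : ℕ∞) f) (hg : ContDiff ℝ (⊤ : ℕ∞) g)
    (pf : PerQ L f) (pg : PerQ L g) (i : Fin 3) :
    (∫ x in Set.univ.pi fun j => Set.Ioo (0:ℝ) (L j), pd i f x * g x)
      = - ∫ x in Set.univ.pi fun j => Set.Ioo (0:ℝ) (L j), f x * pd i g x := by
  have hdf : Differentiable ℝ f := hf.differentiable (by simp)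
  have hdg : Differentiable ℝ g := hg.differentiable (by simp)
  have h0 := integral_pd_eq_zero hL (hf.mul hg) (perQ_mul pf pg) i
  have hrw : ∀ x, pd i (fun y => f y * g y) x = pd i f x * g x + f x * pd i g x :=
    fun x => pd_mul (hdf x) (hdg x) i
  rw [setIntegral_congr_fun (MeasurableSet.univ_pi fun j => measurableSet_Ioo) (fun x _ => hrw x)] at h0
  rw [integral_add (intgOn (((smooth_pd hf i).continuous).fun_mul hg.continuous))
    (intgOn ((hf.continuous).fun_mul (smooth_pd hg i).continuous))] at h0
  linarith
lemma sdiff {f : (Fin 3 → ℝ) → ℝ} (hf : ContDiff ℝ (⊤ : ℕ∞) f) (x : Fin 3 → ℝ) :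
    DifferentiableAt ℝ f x := hf.differentiable (by simp) x

lemma smooth_lap {f : (Fin 3 → ℝ) → ℝ} (hf : ContDiff ℝ (⊤ : ℕ∞) f) :
    ContDiff ℝ (⊤ : ℕ∞) (lap f) := by
  have : lap f = fun x => ∑ p, pd p (pd p f) x := rfl
  rw [this]
  exact ContDiff.sum fun p _ => smooth_pd (smooth_pd hf p) p

lemma perQ_lap {L : Fin 3 → ℝ} {f : (Fin 3 → ℝ) → ℝ} (hf : ContDiff ℝ (⊤ : ℕ∞) f)
    (pf : PerQ L f) : PerQ L (lap f) := by
  intro x k i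
  show (∑ p, pd p (pd p f) _) = ∑ p, pd p (pd p f) x
  exact Finset.sum_congr rfl fun p _ => perQ_pd (smooth_pd hf p) (perQ_pd hf pf p) p x k i

lemma msΩ {L : Fin 3 → ℝ} : MeasurableSet (Set.univ.pi fun j => Set.Ioo (0:ℝ) (L j)) :=
  MeasurableSet.univ_pi fun j => measurableSet_Ioo

lemma lapA {L : Fin 3 → ℝ} (hL : ∀ i, 0 < L i) {f : (Fin 3 → ℝ) → ℝ}
    (hf : ContDiff ℝ (⊤ : ℕ∞) f) (pf : PerQ L f) :
    (∫ x in Set.univ.pi fun j => Set.Ioo (0:ℝ) (L j), (lap f x)^2)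
      = ∑ p, ∑ q, ∫ x in Set.univ.pi fun j => Set.Ioo (0:ℝ) (L j), (pd q (pd p f) x)^2 := by
  have s2 : ∀ p q : Fin 3, ContDiff ℝ (⊤ : ℕ∞) (pd q (pd p f)) := fun p q =>
    smooth_pd (smooth_pd hf p) q
  have step0 : ∀ x, (lap f x)^2 = ∑ p, ∑ q, (pd p (pd p f) x) * (pd q (pd q f) x) := by
    intro x
    rw [sq]
    exact Finset.sum_mul_sum _ _ _ _
  rw [setIntegral_congr_fun msΩ (fun x _ => step0 x)]
  rw [integral_finset_sum _ (fun p _ => by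
    apply intgOn
    exact continuous_finset_sum _ fun q _ => ((s2 p p).continuous.mul (s2 q q).continuous))]
  refine Finset.sum_congr rfl fun p _ => ?_
  rw [integral_finset_sum _ (fun q _ => intgOn ((s2 p p).continuous.fun_mul (s2 q q).continuous))]
  refine Finset.sum_congr rfl fun q _ => ?_
  -- ∫ pd p (pd p f) * pd q (pd q f) = ∫ (pd q (pd p f))^2
  have e1 := ibp hL (smooth_pd hf p) (s2 q q) (perQ_pd hf pf p)
    (perQ_pd (smooth_pd hf q) (perQ_pd hf pf q) q) p
  have swap1 : ∀ x, pd p (pd q (pd q f)) x = pd q (pd q (pd p f)) x := by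
    intro x
    rw [pd_comm (smooth_pd hf q) p q x]
    have hfun : pd p (pd q f) = pd q (pd p f) := funext fun y => pd_comm hf p q y
    rw [hfun]
  have e1' : (∫ x in Set.univ.pi fun j => Set.Ioo (0:ℝ) (L j),
        pd p f x * pd p (pd q (pd q f)) x)
      = ∫ x in Set.univ.pi fun j => Set.Ioo (0:ℝ) (L j),
        pd p f x * pd q (pd q (pd p f)) x :=
    setIntegral_congr_fun msΩ (fun x _ => by rw [swap1 x])
  have e2 := ibp hL (smooth_pd hf p) (s2 p q) (perQ_pd hf pf p)
    (perQ_pd (smooth_pd hf p) (perQ_pd hf pf p) q) q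
  calc (∫ x in Set.univ.pi fun j => Set.Ioo (0:ℝ) (L j),
        pd p (pd p f) x * pd q (pd q f) x)
      = -∫ x in Set.univ.pi fun j => Set.Ioo (0:ℝ) (L j),
          pd p f x * pd p (pd q (pd q f)) x := e1
    _ = -∫ x in Set.univ.pi fun j => Set.Ioo (0:ℝ) (L j),
          pd p f x * pd q (pd q (pd p f)) x := by rw [e1']
    _ = ∫ x in Set.univ.pi fun j => Set.Ioo (0:ℝ) (L j),
          pd q (pd p f) x * pd q (pd p f) x := e2.symm
    _ = ∫ x in Set.univ.pi fun j => Set.Ioo (0:ℝ) (L j),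
          (pd q (pd p f) x)^2 :=
        setIntegral_congr_fun msΩ (fun x _ => (pow_two _).symm)
lemma crossB {L : Fin 3 → ℝ} (hL : ∀ i, 0 < L i)
    {v : (Fin 3 → ℝ) → (Fin 3 → ℝ)} (hv : ContDiff ℝ (⊤ : ℕ∞) v)
    (hper : ∀ (x : Fin 3 → ℝ) (k : ℤ) (i : Fin 3),
      v (x + (k : ℝ) • (Pi.single i (L i) : Fin 3 → ℝ)) = v x)
    (hdiv : ∀ x : Fin 3 → ℝ, ∑ k, pd k (fun y => v y k) x = 0) :
    (∑ k, ∑ m, ∫ x in Set.univ.pi fun j => Set.Ioo (0:ℝ) (L j),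
      lap (pd m (fun z => v z k)) x * lap (pd k (fun z => v z m)) x) = 0 := by
  have hV : ∀ k, ContDiff ℝ (⊤ : ℕ∞) (fun z => v z k) := fun k => contDiff_pi.1 hv k
  have pV : ∀ k : Fin 3, PerQ L (fun z => v z k) := fun k x K i => congrFun (hper x K i) k
  set G : Fin 3 → (Fin 3 → ℝ) → ℝ := fun k => lap (fun z => v z k) with hG
  have hGs : ∀ k, ContDiff ℝ (⊤ : ℕ∞) (G k) := fun k => smooth_lap (hV k)
  have pG : ∀ k, PerQ L (G k) := fun k => perQ_lap (hV k) (pV k)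
  have hGfun : ∀ k, G k = fun y => ∑ p, pd p (pd p (fun z => v z k)) y := fun k => rfl
  -- `lap (∂_m v_k) = ∂_m (lap v_k)` as functions
  have hlapw : ∀ k m, lap (pd m (fun z => v z k)) = pd m (G k) := by
    intro k m
    funext x
    show (∑ p, pd p (pd p (pd m (fun z => v z k))) x) = _
    have hsw : ∀ p : Fin 3, pd p (pd p (pd m (fun z => v z k))) x
        = pd m (pd p (pd p (fun z => v z k))) x := by
      intro p
      have i1 : pd p (pd m (fun z => v z k)) = pd m (pd p (fun z => v z k)) :=
        funext fun y => pd_comm (hV k) p m y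
      rw [i1, pd_comm (smooth_pd (hV k) p) p m x]
    rw [Finset.sum_congr rfl fun p _ => hsw p]
    rw [← pd_sum (fun p => sdiff (smooth_pd (smooth_pd (hV k) p) p) x) m]
    rfl
  -- `∑ m, ∂_k ∂_m (lap v_m) = 0` pointwise
  have hzero : (fun y => ∑ m, pd m (G m) y) = fun _ => (0:ℝ) := by
    funext y
    show (∑ m, pd m (G m) y) = 0
    have step : ∀ m : Fin 3, pd m (G m) y
        = ∑ p, pd p (pd p (pd m (fun z => v z m))) y := by
      intro m
      rw [hGfun m, pd_sum (fun p => sdiff (smooth_pd (smooth_pd (hV m) p) p) y) m]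
      refine Finset.sum_congr rfl fun p _ => ?_
      have i1 : pd m (pd p (fun z => v z m)) = pd p (pd m (fun z => v z m)) :=
        funext fun t => pd_comm (hV m) m p t
      rw [pd_comm (smooth_pd (hV m) p) m p y, i1]
    rw [Finset.sum_congr rfl fun m _ => step m, Finset.sum_comm]
    have inner : ∀ p : Fin 3, (∑ m, pd p (pd p (pd m (fun z => v z m))) y) = 0 := by
      intro p
      rw [← pd_sum (fun m => sdiff (smooth_pd (smooth_pd (hV m) m) p) y) p]
      have i2 : (fun z => ∑ m, pd p (pd m (fun z' => v z' m)) z)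
          = pd p (fun z' => ∑ m, pd m (fun z'' => v z'' m) z') := by
        funext z
        exact (pd_sum (fun m => sdiff (smooth_pd (hV m) m) z) p).symm
      have i3 : (fun z' => ∑ m, pd m (fun z'' => v z'' m) z') = fun _ => (0:ℝ) :=
        funext fun z' => hdiv z'
      rw [i2, i3]
      have i4 : pd p (fun _ => (0:ℝ)) = fun _ => (0:ℝ) := funext fun t => pd_const 0 p t
      rw [i4, pd_const]
    rw [Finset.sum_congr rfl fun p _ => inner p, Finset.sum_const, smul_zero]
  -- assemble
  simp only [hlapw]
  have main : ∀ k : Fin 3, (∑ m, ∫ x in Set.univ.pi fun j => Set.Ioo (0:ℝ) (L j),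
      pd m (G k) x * pd k (G m) x) = 0 := by
    intro k
    have e1 : ∀ m : Fin 3, (∫ x in Set.univ.pi fun j => Set.Ioo (0:ℝ) (L j),
        pd m (G k) x * pd k (G m) x)
        = -∫ x in Set.univ.pi fun j => Set.Ioo (0:ℝ) (L j),
            G k x * pd k (pd m (G m)) x := by
      intro m
      have := ibp hL (hGs k) (smooth_pd (hGs m) k) (pG k) (perQ_pd (hGs m) (pG m) k) m
      rw [this]
      congr 1
      refine setIntegral_congr_fun msΩ (fun x _ => ?_)
      rw [pd_comm (hGs m) m k x]
    rw [Finset.sum_congr rfl fun m _ => e1 m]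
    rw [Finset.sum_neg_distrib, neg_eq_zero]
    rw [← integral_finset_sum _ (fun m _ => intgOn ((hGs k).continuous.fun_mul
      (smooth_pd (smooth_pd (hGs m) m) k).continuous))]
    have : ∀ x, (∑ m, G k x * pd k (pd m (G m)) x) = 0 := by
      intro x
      rw [← Finset.mul_sum]
      have : (∑ m, pd k (pd m (G m)) x) = 0 := by
        rw [← pd_sum (fun m => sdiff (smooth_pd (hGs m) m) x) k, hzero, pd_const]
      rw [this, mul_zero]
    rw [setIntegral_congr_fun msΩ (fun x _ => this x), integral_zero]
  rw [Finset.sum_congr rfl fun k _ => main k, Finset.sum_const, smul_zero]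
lemma lap_avg {f g : (Fin 3 → ℝ) → ℝ} (hf : ContDiff ℝ (⊤ : ℕ∞) f)
    (hg : ContDiff ℝ (⊤ : ℕ∞) g) (x : Fin 3 → ℝ) :
    lap (fun y => (f y + g y)/2) x = (lap f x + lap g x)/2 := by
  have h1 : ∀ p : Fin 3, pd p (fun y => (f y + g y)/2)
      = fun y => (pd p f y + pd p g y)/2 := by
    intro p; funext y
    rw [pd_div 2 ((sdiff hf y).fun_add (sdiff hg y)) p, pd_add (sdiff hf y) (sdiff hg y) p]
  have h2 : ∀ p : Fin 3, pd p (pd p (fun y => (f y + g y)/2)) x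
      = (pd p (pd p f) x + pd p (pd p g) x)/2 := by
    intro p
    rw [h1 p, pd_div 2 ((sdiff (smooth_pd hf p) x).fun_add (sdiff (smooth_pd hg p) x)) p,
      pd_add (sdiff (smooth_pd hf p) x) (sdiff (smooth_pd hg p) x) p]
  show (∑ p, pd p (pd p (fun y => (f y + g y)/2)) x) = _
  rw [Finset.sum_congr rfl fun p _ => h2 p, ← Finset.sum_div, Finset.sum_add_distrib]
  rfl

lemma alg_id (a : Fin 3 → Fin 3 → ℝ) :
    (∑ k, ∑ m, ((a k m + a m k)/2)^2)
      = ∑ k, ∑ m, ((a k m)^2/2 + a k m * a m k/2) := by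
  have e1 : (∑ k, ∑ m, ((a k m + a m k)/2)^2)
      = ∑ k, ∑ m, ((a k m)^2/4 + a k m * a m k/2 + (a m k)^2/4) :=
    Finset.sum_congr rfl fun k _ => Finset.sum_congr rfl fun m _ => by ring
  rw [e1]
  simp only [Finset.sum_add_distrib]
  rw [Finset.sum_comm (f := fun k m => (a m k)^2/4)]
  simp only [← Finset.sum_div]
  ring

/-- For a smooth `Ω`-periodic divergence-free vector field `v`,
`∫_Ω |Δ D(v)|² = ½ ∫_Ω Σ_{k,m,p,q} (∂³ v_k / ∂x_m ∂x_p ∂x_q)²`. -/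
theorem integral_sq_lap_sym_grad
    (L : Fin 3 → ℝ) (hL : ∀ i, 0 < L i)
    (v : (Fin 3 → ℝ) → (Fin 3 → ℝ)) (hv : ContDiff ℝ (⊤ : ℕ∞) v)
    (hper : ∀ (x : Fin 3 → ℝ) (k : ℤ) (i : Fin 3),
      v (x + (k : ℝ) • (Pi.single i (L i) : Fin 3 → ℝ)) = v x)
    (hdiv : ∀ x : Fin 3 → ℝ, ∑ k, pd k (fun y => v y k) x = 0) :
    (∫ x in Set.univ.pi fun i => Set.Ioo 0 (L i),
        ∑ k, ∑ m,
          (lap (fun y => (pd m (fun z => v z k) y + pd k (fun z => v z m) y) / 2) x) ^ 2)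
      = (1 / 2) * ∫ x in Set.univ.pi fun i => Set.Ioo 0 (L i),
          ∑ k, ∑ m, ∑ p, ∑ q,
            (pd q (pd p (pd m (fun z => v z k))) x) ^ 2 := by
  have hv' : ContDiff ℝ (⊤ : ℕ∞) v := hv.of_le (by simp)
  have hV : ∀ k, ContDiff ℝ (⊤ : ℕ∞) (fun z => v z k) := fun k => contDiff_pi.1 hv' k
  have pV : ∀ k : Fin 3, PerQ L (fun z => v z k) := fun k x K i => congrFun (hper x K i) k
  have hw : ∀ k m, ContDiff ℝ (⊤ : ℕ∞) (pd m (fun z => v z k)) := fun k m =>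
    smooth_pd (hV k) m
  have pw : ∀ k m, PerQ L (pd m (fun z => v z k)) := fun k m => perQ_pd (hV k) (pV k) m
  have contA : ∀ k m : Fin 3, Continuous (lap (pd m (fun z => v z k))) := fun k m =>
    (smooth_lap (hw k m)).continuous
  have contT : ∀ k m p q : Fin 3,
      Continuous (pd q (pd p (pd m (fun z => v z k)))) := fun k m p q =>
    (smooth_pd (smooth_pd (hw k m) p) q).continuous
  -- pointwise rewrite of the LHS integrand
  have hpt : ∀ x, (∑ k, ∑ m,
        (lap (fun y => (pd m (fun z => v z k) y + pd k (fun z => v z m) y) / 2) x) ^ 2)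
      = ∑ k, ∑ m, ((lap (pd m (fun z => v z k)) x)^2/2
          + lap (pd m (fun z => v z k)) x * lap (pd k (fun z => v z m)) x/2) := by
    intro x
    have h1 : ∀ k m : Fin 3,
        (lap (fun y => (pd m (fun z => v z k) y + pd k (fun z => v z m) y) / 2) x)^2
          = ((lap (pd m (fun z => v z k)) x + lap (pd k (fun z => v z m)) x)/2)^2 := by
      intro k m
      rw [lap_avg (hw k m) (hw m k) x]
    rw [Finset.sum_congr rfl fun k _ => Finset.sum_congr rfl fun m _ => h1 k m]
    exact alg_id (fun k m => lap (pd m (fun z => v z k)) x)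
  rw [setIntegral_congr_fun msΩ (fun x _ => hpt x)]
  -- split the integral into a sum of integrals
  rw [integral_finset_sum _ (fun k _ => intgOn (continuous_finset_sum _ fun m _ =>
    (((contA k m).fun_pow 2).div_const 2).fun_add (((contA k m).fun_mul (contA m k)).div_const 2)))]
  rw [Finset.sum_congr rfl fun k _ => integral_finset_sum _ (fun m _ => intgOn
    ((((contA k m).fun_pow 2).div_const 2).fun_add (((contA k m).fun_mul (contA m k)).div_const 2)))]
  rw [Finset.sum_congr rfl fun k _ => Finset.sum_congr rfl fun m _ =>
    integral_add (intgOn (((contA k m).fun_pow 2).div_const 2))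
      (intgOn (((contA k m).fun_mul (contA m k)).div_const 2))]
  simp only [integral_div]
  rw [Finset.sum_congr rfl fun k (_ : k ∈ Finset.univ) => Finset.sum_add_distrib,
    Finset.sum_add_distrib]
  -- the cross part vanishes
  have hcross : (∑ k, ∑ m, (∫ x in Set.univ.pi fun i => Set.Ioo (0:ℝ) (L i),
      lap (pd m (fun z => v z k)) x * lap (pd k (fun z => v z m)) x)/2) = 0 := by
    simp only [← Finset.sum_div]
    rw [crossB hL hv' hper hdiv]
    norm_num
  rw [hcross, add_zero]
  -- the diagonal part
  rw [Finset.sum_congr rfl fun k (_ : k ∈ Finset.univ) =>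
    Finset.sum_congr rfl fun m (_ : m ∈ Finset.univ) => by
      rw [lapA hL (hw k m) (pw k m)]]
  -- convert RHS: integral of big sum into sum of integrals
  rw [integral_finset_sum _ (fun k _ => intgOn (continuous_finset_sum _ fun m _ =>
    continuous_finset_sum _ fun p _ => continuous_finset_sum _ fun q _ =>
      (contT k m p q).fun_pow 2))]
  rw [Finset.sum_congr rfl fun k _ => integral_finset_sum _ (fun m _ => intgOn
    (continuous_finset_sum _ fun p _ => continuous_finset_sum _ fun q _ =>
      (contT k m p q).fun_pow 2))]
  rw [Finset.sum_congr rfl fun k _ => Finset.sum_congr rfl fun m _ =>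
    integral_finset_sum _ (fun p _ => intgOn
      (continuous_finset_sum _ fun q _ => (contT k m p q).fun_pow 2))]
  rw [Finset.sum_congr rfl fun k _ => Finset.sum_congr rfl fun m _ =>
    Finset.sum_congr rfl fun p _ => integral_finset_sum _ (fun q _ => intgOn
      ((contT k m p q).fun_pow 2))]
  simp only [← Finset.sum_div]
  ring
end

section
/- Let B > 0, c > 0, γ ≥ 1 and T* > 0. Let f : [0,T*] → ℝ be differentiable with f(t) ≥ 1 for all t ∈ [0,T*] and f'(t) ≤ B (1 + c t)^{γ−1} f(t)^{15} for all t ∈ [0,T*]. Suppose moreover that f(0)^{-14} = (15 B / (γ c)) · ((1 + c T*)^{γ} − 1). Then for all t ∈ [0,T*]: f(t)^{-14} ≥ (B / (γ c)) · ((1 + c T*)^{γ} − 1) > 0; in particular f(t) ≤ [ (B / (γ c)) ((1 + c T*)^{γ} − 1) ]^{-1/14} for all t ∈ [0,T*]. -/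
open Real

/-- Uniform bound for the Galerkin approximations on `[0, T*]`: if `f ≥ 1`,
`f' ≤ B (1+ct)^(γ−1) f^15` on `[0,T*]` and `f(0)⁻¹⁴ = (15B/(γc))((1+cT*)^γ − 1)`,
then `f(t)⁻¹⁴ ≥ (B/(γc))((1+cT*)^γ − 1) > 0`, and in particular
`f(t) ≤ [(B/(γc))((1+cT*)^γ − 1)]^(−1/14)` on `[0,T*]`. -/
theorem galerkin_uniform_bound (B c γ Tstar : ℝ)
    (hB : 0 < B) (hc : 0 < c) (hγ : 1 ≤ γ) (hT : 0 < Tstar)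
    (f f' : ℝ → ℝ)
    (hderiv : ∀ t ∈ Set.Icc (0 : ℝ) Tstar, HasDerivAt f (f' t) t)
    (hf1 : ∀ t ∈ Set.Icc (0 : ℝ) Tstar, 1 ≤ f t)
    (hbound : ∀ t ∈ Set.Icc (0 : ℝ) Tstar,
      f' t ≤ B * (1 + c * t) ^ (γ - 1) * f t ^ 15)
    (hinit : (f 0 ^ 14)⁻¹ = (15 * B / (γ * c)) * ((1 + c * Tstar) ^ γ - 1)) :
    ∀ t ∈ Set.Icc (0 : ℝ) Tstar,
      ((B / (γ * c)) * ((1 + c * Tstar) ^ γ - 1) ≤ (f t ^ 14)⁻¹ ∧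
        0 < (B / (γ * c)) * ((1 + c * Tstar) ^ γ - 1)) ∧
      f t ≤ ((B / (γ * c)) * ((1 + c * Tstar) ^ γ - 1)) ^ (-(1 : ℝ) / 14) := by
  have hγ0 : 0 < γ := lt_of_lt_of_le one_pos hγ
  have hγc : 0 < γ * c := mul_pos hγ0 hc
  set M : ℝ := (1 + c * Tstar) ^ γ - 1 with hM
  have hbase : (1 : ℝ) < 1 + c * Tstar := by nlinarith
  have hMpos : 0 < M := by
    have : (1 : ℝ) < (1 + c * Tstar) ^ γ :=
      Real.one_lt_rpow_iff_of_pos (by linarith) |>.mpr (Or.inl ⟨hbase, hγ0⟩)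
    simpa [hM] using sub_pos.mpr this
  set K : ℝ := (B / (γ * c)) * M with hK
  have hKpos : 0 < K := mul_pos (div_pos hB hγc) hMpos
  -- auxiliary function
  set h : ℝ → ℝ := fun t => (f t ^ 14)⁻¹ + (14 * B / (γ * c)) * ((1 + c * t) ^ γ - 1)
    with hh
  have hfpos : ∀ t ∈ Set.Icc (0 : ℝ) Tstar, 0 < f t := fun t ht =>
    lt_of_lt_of_le one_pos (hf1 t ht)
  have hDeriv : ∀ t ∈ Set.Icc (0 : ℝ) Tstar, HasDerivAt h
      (-(14 * f t ^ 13 * f' t) / (f t ^ 14) ^ 2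
        + (14 * B / (γ * c)) * (c * γ * (1 + c * t) ^ (γ - 1))) t := by
    intro t ht
    have h1 : HasDerivAt (fun t => (f t ^ 14)⁻¹)
        (-(14 * f t ^ 13 * f' t) / (f t ^ 14) ^ 2) t := by
      have := (((hderiv t ht).pow 14).inv (pow_ne_zero 14 (hfpos t ht).ne'))
      refine HasDerivAt.congr_deriv this ?_
      rw [Pi.pow_apply]; norm_num
    have h2 : HasDerivAt (fun t => (1 + c * t) ^ γ)
        (c * γ * (1 + c * t) ^ (γ - 1)) t := by
      have hlin : HasDerivAt (fun t : ℝ => 1 + c * t) c t := by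
        simpa using ((hasDerivAt_id t).const_mul c).const_add 1
      exact hlin.rpow_const (Or.inr hγ)
    exact h1.add (((h2.sub_const 1).const_mul (14 * B / (γ * c))))
  have hMono : MonotoneOn h (Set.Icc (0 : ℝ) Tstar) := by
    apply monotoneOn_of_deriv_nonneg (convex_Icc _ _)
    · exact fun t ht => (hDeriv t ht).continuousAt.continuousWithinAt
    · intro t ht
      rw [interior_Icc] at ht
      have ht' : t ∈ Set.Icc (0 : ℝ) Tstar := Set.mem_Icc.mpr ⟨ht.1.le, ht.2.le⟩
      exact (hDeriv t ht').differentiableAt.differentiableWithinAt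
    · intro t ht
      rw [interior_Icc] at ht
      have ht' : t ∈ Set.Icc (0 : ℝ) Tstar := Set.mem_Icc.mpr ⟨ht.1.le, ht.2.le⟩
      rw [(hDeriv t ht').deriv]
      have hft := hfpos t ht'
      have hb := hbound t ht'
      have hpow : 0 < f t ^ 13 := pow_pos hft 13
      have hrp : 0 < (1 + c * t) ^ (γ - 1) :=
        Real.rpow_pos_of_pos (by nlinarith [ht.1] : (0:ℝ) < 1 + c * t) _
      have key : f' t * f t ^ 13 ≤ B * (1 + c * t) ^ (γ - 1) * f t ^ 15 * f t ^ 13 :=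
        mul_le_mul_of_nonneg_right hb hpow.le
      have h28 : (f t ^ 14) ^ 2 = f t ^ 15 * f t ^ 13 := by ring
      have hstep : -(14 * f t ^ 13 * f' t) / (f t ^ 14) ^ 2
          ≥ -(14 * B * (1 + c * t) ^ (γ - 1)) := by
        rw [ge_iff_le, le_div_iff₀ (by positivity), h28]
        nlinarith [key, mul_pos (pow_pos hft 15) hpow]
      have hc2 : (14 * B / (γ * c)) * (c * γ * (1 + c * t) ^ (γ - 1))
          = 14 * B * (1 + c * t) ^ (γ - 1) := by
        field_simp
      rw [hc2]
      linarith [hstep]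
  have h0 : h 0 = 15 * (B / (γ * c)) * M := by
    simp only [hh]
    rw [show c * (0:ℝ) = 0 by ring]
    rw [show (1:ℝ) + 0 = 1 by ring, Real.one_rpow]
    rw [hinit]
    ring
  intro t ht
  have hht : h 0 ≤ h t := hMono (Set.left_mem_Icc.mpr hT.le) ht ht.1
  have hMt : (1 + c * t) ^ γ - 1 ≤ M := by
    have : (1 + c * t) ^ γ ≤ (1 + c * Tstar) ^ γ :=
      Real.rpow_le_rpow (by nlinarith [ht.1]) (by nlinarith [ht.2]) hγ0.le
    simpa [hM] using sub_le_sub_right this 1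
  have hmain : K ≤ (f t ^ 14)⁻¹ := by
    have h14 : 0 ≤ 14 * B / (γ * c) := by positivity
    have : 15 * (B / (γ * c)) * M ≤ (f t ^ 14)⁻¹
        + (14 * B / (γ * c)) * ((1 + c * t) ^ γ - 1) := by
      rw [← h0]; exact hht
    have h2 : (14 * B / (γ * c)) * ((1 + c * t) ^ γ - 1)
        ≤ (14 * B / (γ * c)) * M := mul_le_mul_of_nonneg_left hMt h14
    have hBγ : 14 * B / (γ * c) = 14 * (B / (γ * c)) := by ring
    rw [hK]; nlinarith [this, h2]
  refine ⟨⟨hmain, hKpos⟩, ?_⟩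
  -- final rpow bound
  have hft := hfpos t ht
  have hf14 : f t ^ 14 ≤ K⁻¹ := by
    rw [← inv_inv (f t ^ 14)]
    exact inv_anti₀ hKpos hmain
  have hrp : (f t ^ 14 : ℝ) ^ ((1:ℝ)/14) ≤ (K⁻¹) ^ ((1:ℝ)/14) :=
    Real.rpow_le_rpow (by positivity) hf14 (by norm_num)
  have hleft : (f t ^ 14 : ℝ) ^ ((1:ℝ)/14) = f t := by
    rw [← Real.rpow_natCast (f t) 14, ← Real.rpow_mul hft.le]
    norm_num
  have hright : (K⁻¹ : ℝ) ^ ((1:ℝ)/14) = K ^ (-(1:ℝ)/14) := by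
    rw [Real.inv_rpow hKpos.le, ← Real.rpow_neg hKpos.le]
    norm_num
  rw [← hleft, ← hright]
  exact hrp
end
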